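/- There exist a vector space V of dimension 2^𝔠 over ℝ consisting of functions from ℝ to ℝ whose restriction to every compact interval is Riemann integrable, and a vector space W of dimension 𝔠 over ℝ consisting of continuous functions from [0,1] to ℝ, such that for every f ∈ V \ {0} and every g ∈ W \ {0}, the composite f ∘ g : [0,1] → ℝ is not Riemann integrable on [0,1]. -/

import Mathlib

/-!
`V` is spanned by `2 ^ 𝔠` indicator functions of sets `{x | |x| ∈ S_A}` with `S_A` inside the
Cantor set, which is closed and null; so every `f ∈ V` is bounded and continuous off a null set.
The sets `S_A` come from the independent family `A ↦ {(F, G) | G = F ∩ A}` of sets of pairs of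
finite sets of reals, each pair being placed in the Cantor set along a sequence tending to `0`.
Hence every `f ≠ 0` in `V` has a value `a ≠ 0 = f 0` with `f v = f (-v) = a` for some `v → 0⁺`.

`W` is spanned by the functions `dist(·, K) ^ t`, `t > 0`, where `K ⊆ [0,1]` is a closed set of
positive measure with dense complement. A nonzero generalized polynomial `∑ cₜ sᵗ` has no zero
on some interval `(0, ε)`, as its term of least exponent dominates. So a nonzero `g ∈ W`
vanishes on `K` but not identically near any point of `K`, and by the intermediate value
theorem it takes the value `v` or `-v` arbitrarily close to each point of `K`. Thus `f ∘ g`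
is discontinuous at every point of `K`.
-/

open MeasureTheory Set Cardinal

/-- A function `f : ℝ → ℝ` is Riemann integrable on `[a,b]` iff it is bounded there and
(by Lebesgue's criterion) its set of discontinuity points (relative to `[a,b]`)
has Lebesgue measure zero. -/
def RiemannIntegrableOn (f : ℝ → ℝ) (a b : ℝ) : Prop :=
  (∃ M : ℝ, ∀ x ∈ Set.Icc a b, |f x| ≤ M) ∧
    volume {x | x ∈ Set.Icc a b ∧ ¬ ContinuousWithinAt f (Set.Icc a b) x} = 0

/-- Riemann integrability on `[0,1]` for a function defined on the interval `[0,1]`: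
boundedness together with the Lebesgue criterion. -/
def RiemannIntegrableI (g : Set.Icc (0:ℝ) 1 → ℝ) : Prop :=
  (∃ M : ℝ, ∀ x, |g x| ≤ M) ∧
    volume (Subtype.val '' {x : Set.Icc (0:ℝ) 1 | ¬ ContinuousAt g x}) = 0

open Filter Topology Function
open scoped ENNReal

theorem volume_preCantorSet_le (n : ℕ) : volume (preCantorSet n) ≤ (2 / 3 : ℝ≥0∞) ^ n := by
  induction n with
  | zero => simp [Real.volume_Icc]
  | succ n ih =>
    have third (c : ℝ) :
        volume ((fun x => (c + x) / 3) '' preCantorSet n) = 3⁻¹ * volume (preCantorSet n) := by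
      rw [show (fun x : ℝ => (c + x) / 3) = AffineMap.homothety (c / 2) (3⁻¹ : ℝ) by
        ext x; simp [AffineMap.homothety_apply]; ring, Measure.addHaar_image_homothety]
      simp
    calc volume (preCantorSet (n + 1))
        ≤ volume ((fun x => (0 + x) / 3) '' preCantorSet n)
          + volume ((fun x => (2 + x) / 3) '' preCantorSet n) := by
          simpa using measure_union_le _ _
      _ = 2 / 3 * volume (preCantorSet n) := by rw [third, third, ENNReal.div_eq_inv_mul]; ring
      _ ≤ (2 / 3) ^ (n + 1) := by rw [pow_succ']; gcongr

theorem volume_cantorSet : volume cantorSet = 0 :=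
  le_antisymm (ge_of_tendsto' (ENNReal.tendsto_pow_atTop_nhds_zero_of_lt_one
    (ENNReal.div_lt_of_lt_mul' (by norm_num)))
    fun n => (measure_mono (iInter_subset _ n)).trans (volume_preCantorSet_le n)) bot_le

theorem volume_abs_preimage_cantorSet : volume (abs ⁻¹' cantorSet) = 0 := by
  refine measure_mono_null (fun x hx => ?_) (measure_union_null volume_cantorSet
    ((Measure.measure_neg volume cantorSet).trans volume_cantorSet))
  rcases abs_choice x with h | h
  · exact Or.inl (h ▸ hx)
  · exact Or.inr (show -x ∈ cantorSet from h ▸ hx)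

theorem riemannIntegrableOn_of_eq_zero_off {f : ℝ → ℝ} {Z : Set ℝ} (hf : ∃ M, ∀ x, |f x| ≤ M)
    (hZ : IsClosed Z) (hZ0 : volume Z = 0) (hfZ : ∀ x ∉ Z, f x = 0) (a b : ℝ) :
    RiemannIntegrableOn f a b := by
  obtain ⟨M, hM⟩ := hf
  refine ⟨⟨M, fun x _ => hM x⟩, measure_mono_null (fun x ⟨_, hdisc⟩ => by_contra fun hx => ?_) hZ0⟩
  have hzero : f =ᶠ[𝓝 x] fun _ => 0 := eventually_of_mem (hZ.isOpen_compl.mem_nhds hx) hfZ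
  exact hdisc (continuousAt_const.congr hzero.symm).continuousWithinAt

theorem not_continuousAt_comp_of_frequently {X : Type*} [ConditionallyCompleteLinearOrder X]
    [TopologicalSpace X] [OrderTopology X] [DenselyOrdered X] {f : ℝ → ℝ} {g : X → ℝ} {x : X}
    {a : ℝ} (hg : Continuous g) (hgx : g x = 0) (hx : x ∈ closure (support g)) (ha : f 0 ≠ a)
    (hf : ∃ᶠ v in 𝓝[>] 0, f v = a ∧ f (-v) = a) : ¬ContinuousAt (fun y => f (g y)) x := by
  intro hcont
  obtain ⟨l, u, hxlu, hlu, hsub⟩ := exists_Icc_mem_subset_of_mem_nhds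
    (hcont.eventually_ne (hgx ▸ ha : f (g x) ≠ a))
  obtain ⟨y, hylu, hy⟩ := mem_closure_iff_nhds.1 hx _ hlu
  obtain ⟨v, ⟨hfv, hfnv⟩, hv⟩ := (hf.and_eventually (Ioo_mem_nhdsGT (abs_pos.2 hy))).exists
  have hval : ∃ w ∈ uIcc (g x) (g y), f w = a := by
    rw [hgx]
    rcases hy.lt_or_gt with hneg | hpos
    · rw [abs_of_neg hneg] at hv
      exact ⟨-v, uIcc_of_ge hneg.le ▸ ⟨by linarith [hv.2], by linarith [hv.1]⟩, hfnv⟩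
    · rw [abs_of_pos hpos] at hv
      exact ⟨v, uIcc_of_le hpos.le ▸ ⟨hv.1.le, hv.2.le⟩, hfv⟩
  obtain ⟨w, hw, hfw⟩ := hval
  obtain ⟨z, hz, rfl⟩ := intermediate_value_uIcc hg.continuousOn hw
  exact hsub (uIcc_subset_Icc hxlu hylu hz) hfw

theorem exists_isClosed_dense_compl_volume_image_ne_zero :
    ∃ K : Set (Icc (0 : ℝ) 1), IsClosed K ∧ Dense Kᶜ ∧ volume (Subtype.val '' K) ≠ 0 := by
  obtain ⟨U, hQU, hU, hUvol⟩ := Set.exists_isOpen_lt_of_lt (range ((↑) : ℚ → ℝ)) 1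
    (by rw [(countable_range _).measure_zero volume]; exact one_pos)
  refine ⟨Subtype.val ⁻¹' Uᶜ, hU.isClosed_compl.preimage continuous_subtype_val, ?_, ?_⟩
  · rw [Subtype.dense_iff, preimage_compl, compl_compl, Subtype.image_preimage_coe]
    calc Icc (0 : ℝ) 1 = closure (Ioo 0 1) := (closure_Ioo zero_ne_one).symm
      _ ⊆ closure (Ioo 0 1 ∩ U) := closure_minimal
          ((Rat.denseRange_cast.mono hQU).open_subset_closure_inter isOpen_Ioo) isClosed_closure
      _ ⊆ closure (Icc 0 1 ∩ U) := closure_mono (inter_subset_inter_left _ Ioo_subset_Icc_self)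
  · rw [Subtype.image_preimage_coe]
    intro h0
    have hcover : Icc (0 : ℝ) 1 ⊆ (Icc 0 1 ∩ Uᶜ) ∪ U := fun x hx =>
      (em (x ∈ U)).elim Or.inr fun h => Or.inl ⟨hx, h⟩
    have := (measure_mono (μ := volume) hcover).trans (measure_union_le _ _)
    rw [h0, zero_add, Real.volume_Icc, sub_zero, ENNReal.ofReal_one] at this
    exact (this.trans_lt hUvol).false

namespace CompositeLineability

noncomputable def cantorMap (a : ℕ → Bool) : ℝ := cantorSetHomeomorphNatToBool.symm a

theorem continuous_cantorMap : Continuous cantorMap :=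
  continuous_subtype_val.comp cantorSetHomeomorphNatToBool.symm.continuous

theorem cantorMap_injective : Injective cantorMap :=
  Subtype.val_injective.comp cantorSetHomeomorphNatToBool.symm.injective

theorem cantorMap_mem_cantorSet (a : ℕ → Bool) : cantorMap a ∈ cantorSet :=
  (cantorSetHomeomorphNatToBool.symm a).2

theorem cantorMap_false : cantorMap (fun _ => false) = 0 := by
  show Real.ofDigits _ = 0
  simp [Real.ofDigits, Real.ofDigitsTerm]

def markedShift (k : ℕ) (b : ℕ → Bool) (n : ℕ) : Bool :=
  if n < k then false else if n = k then true else b (n - (k + 1))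

theorem markedShift_injective : Injective (uncurry markedShift) := by
  rintro ⟨k, b⟩ ⟨k', b'⟩ h
  have hk : k = k' := by
    by_contra hne
    rcases lt_or_gt_of_ne hne with hlt | hlt
    · simpa [markedShift, hlt] using congrFun h k
    · simpa [markedShift, hlt] using congrFun h k'
  subst hk
  refine Prod.ext rfl (funext fun n => ?_)
  have hn : ¬n + (k + 1) < k ∧ n + (k + 1) ≠ k := by omega
  simpa [markedShift, hn] using congrFun h (n + (k + 1))

theorem markedShift_ne_false (k : ℕ) (b : ℕ → Bool) : markedShift k b ≠ fun _ => false :=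
  fun h => by simpa [markedShift] using congrFun h k

theorem tendsto_markedShift (b : ℕ → Bool) :
    Tendsto (markedShift · b) atTop (𝓝 fun _ => false) :=
  tendsto_pi_nhds.2 fun n => tendsto_const_nhds.congr'
    (eventually_atTop.2 ⟨n + 1, fun k hk => by simp [markedShift, Nat.lt_of_succ_le hk]⟩)

abbrev Probe : Type := Finset ℝ × Finset ℝ

theorem mk_probe_le : #Probe ≤ #(ℕ → Bool) := by
  rw [mk_prod, mk_finset_of_infinite, mk_real, lift_id, mul_eq_self aleph0_le_continuum,
    mk_arrow, mk_bool, mk_nat, lift_id, lift_aleph0, two_power_aleph0]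

noncomputable def probeEmbedding : Probe ↪ (ℕ → Bool) :=
  Classical.choice ((Cardinal.le_def Probe (ℕ → Bool)).1 mk_probe_le)

noncomputable def probePt (k : ℕ) (ω : Probe) : ℝ := cantorMap (markedShift k (probeEmbedding ω))

theorem probePt_injective : Injective (uncurry probePt) := by
  rintro ⟨k, ω⟩ ⟨k', ω'⟩ h
  have h' := markedShift_injective (cantorMap_injective h :
    uncurry markedShift (k, probeEmbedding ω) = uncurry markedShift (k', probeEmbedding ω'))
  simp only [Prod.mk.injEq] at h' ⊢
  exact ⟨h'.1, probeEmbedding.injective h'.2⟩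

theorem probePt_pos (k : ℕ) (ω : Probe) : 0 < probePt k ω := by
  have hne := cantorMap_injective.ne (markedShift_ne_false k (probeEmbedding ω))
  rw [cantorMap_false] at hne
  exact (cantorSet_subset_unitInterval (cantorMap_mem_cantorSet _)).1.lt_of_ne' hne

theorem tendsto_probePt (ω : Probe) : Tendsto (probePt · ω) atTop (𝓝[>] 0) :=
  tendsto_nhdsWithin_iff.2 ⟨cantorMap_false ▸ (continuous_cantorMap.tendsto _).comp
    (tendsto_markedShift _), Eventually.of_forall fun k => probePt_pos k ω⟩

def Sees (A : Set ℝ) : Set Probe := {ω | (ω.2 : Set ℝ) = ↑ω.1 ∩ A}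

theorem exists_sees_not_sees (s : Finset (Set ℝ)) (A₀ : Set ℝ) :
    ∃ ω ∈ Sees A₀, ∀ A ∈ s, A ≠ A₀ → ω ∉ Sees A := by
  classical
  have hdiff (A) (hA : A ∈ s.erase A₀) : ∃ r, ¬(r ∈ A ↔ r ∈ A₀) := by
    by_contra! h
    exact Finset.ne_of_mem_erase hA (Set.ext h)
  choose r hr using hdiff
  let F : Finset ℝ := (s.erase A₀).attach.image fun A => r A.1 A.2
  refine ⟨(F, F.filter (· ∈ A₀)), by simp [Sees, Set.ext_iff], fun A hA hne hsees => ?_⟩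
  have hA' : A ∈ s.erase A₀ := Finset.mem_erase.2 ⟨hne, hA⟩
  have hrF : r A hA' ∈ F := Finset.mem_image.2 ⟨⟨A, hA'⟩, Finset.mem_attach _ _, rfl⟩
  have h := Set.ext_iff.1 hsees (r A hA')
  simp only [Finset.coe_filter, mem_ofPred_eq, hrF, true_and, mem_inter_iff, SetLike.mem_coe] at h
  exact hr A hA' h.symm

noncomputable def spike (A : Set ℝ) : ℝ → ℝ :=
  {x | ∃ k, ∃ ω ∈ Sees A, |x| = probePt k ω}.indicator 1

theorem spike_eq_of_abs_eq {A : Set ℝ} {x : ℝ} {k : ℕ} {ω : Probe} (hx : |x| = probePt k ω) :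
    spike A x = (Sees A).indicator 1 ω := by
  have hmem : (∃ k', ∃ ω' ∈ Sees A, |x| = probePt k' ω') ↔ ω ∈ Sees A := by
    refine ⟨fun ⟨k', ω', hω', h⟩ => ?_, fun hω => ⟨k, ω, hω, hx⟩⟩
    have := @probePt_injective (k', ω') (k, ω) (h.symm.trans hx)
    simp only [Prod.mk.injEq] at this
    exact this.2 ▸ hω'
  classical
  simp only [spike, indicator_apply, mem_ofPred_eq, hmem, Pi.one_apply]

theorem spike_of_abs_notMem {A : Set ℝ} {x : ℝ} (hx : |x| ∉ cantorSet) : spike A x = 0 :=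
  indicator_of_notMem (by rintro ⟨k, ω, -, h⟩; exact hx (h ▸ cantorMap_mem_cantorSet _)) _

theorem spike_zero (A : Set ℝ) : spike A 0 = 0 :=
  indicator_of_notMem (by rintro ⟨k, ω, -, h⟩; exact (probePt_pos k ω).ne (by simpa using h)) _

theorem abs_spike_le_one (A : Set ℝ) (x : ℝ) : |spike A x| ≤ 1 := by
  classical
  simp only [spike, indicator_apply]
  split_ifs <;> simp

theorem linearCombination_spike_apply (c : Set ℝ →₀ ℝ) (x : ℝ) :
    Finsupp.linearCombination ℝ spike c x = ∑ A ∈ c.support, c A * spike A x := by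
  simp [Finsupp.linearCombination_apply, Finsupp.sum]

theorem exists_frequently_linearCombination_spike_eq {c : Set ℝ →₀ ℝ} (hc : c ≠ 0) :
    ∃ a ≠ 0, ∃ᶠ v in 𝓝[>] 0, Finsupp.linearCombination ℝ spike c v = a ∧
      Finsupp.linearCombination ℝ spike c (-v) = a := by
  obtain ⟨A₀, hA₀⟩ := Finsupp.support_nonempty_iff.2 hc
  obtain ⟨ω₀, hω₀, hsep⟩ := exists_sees_not_sees c.support A₀
  have hval {x : ℝ} {k : ℕ} (hx : |x| = probePt k ω₀) :
      Finsupp.linearCombination ℝ spike c x = c A₀ := by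
    rw [linearCombination_spike_apply, Finset.sum_eq_single A₀
      (fun A hA hne => by simp [spike_eq_of_abs_eq hx, hsep A hA hne]) (absurd hA₀)]
    simp [spike_eq_of_abs_eq hx, hω₀]
  have habs (k : ℕ) : |probePt k ω₀| = probePt k ω₀ := abs_of_pos (probePt_pos k ω₀)
  exact ⟨c A₀, Finsupp.mem_support_iff.1 hA₀, (tendsto_probePt ω₀).frequently
    (Frequently.of_forall fun k => ⟨hval (habs k), hval ((abs_neg _).trans (habs k))⟩)⟩

theorem linearIndependent_spike : LinearIndependent ℝ spike := by
  refine linearIndependent_iff.2 fun c hc => by_contra fun hc0 => ?_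
  obtain ⟨a, ha, hfreq⟩ := exists_frequently_linearCombination_spike_eq hc0
  obtain ⟨v, hv, -⟩ := hfreq.exists
  exact ha (by simpa [hc] using hv.symm)

theorem rank_span_spike : Module.rank ℝ (Submodule.span ℝ (range spike)) = 2 ^ 𝔠 := by
  rw [rank_span linearIndependent_spike, mk_range_eq _ linearIndependent_spike.injective,
    mk_set, mk_real]

theorem riemannIntegrableOn_of_mem_span_spike {f : ℝ → ℝ} (hf : f ∈ Submodule.span ℝ (range spike))
    (a b : ℝ) : RiemannIntegrableOn f a b := by
  rw [← Finsupp.range_linearCombination] at hf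
  obtain ⟨c, rfl⟩ := hf
  refine riemannIntegrableOn_of_eq_zero_off ⟨∑ A ∈ c.support, |c A|, fun x => ?_⟩
    (isClosed_cantorSet.preimage continuous_abs) volume_abs_preimage_cantorSet
    (fun x hx => by simp [linearCombination_spike_apply, spike_of_abs_notMem hx]) a b
  rw [linearCombination_spike_apply]
  refine (Finset.abs_sum_le_sum_abs _ _).trans (Finset.sum_le_sum fun A _ => ?_)
  rw [abs_mul]
  exact mul_le_of_le_one_right (abs_nonneg _) (abs_spike_le_one A x)

noncomputable def powSum (c : Ioi (0 : ℝ) →₀ ℝ) (s : ℝ) : ℝ := ∑ t ∈ c.support, c t * s ^ (t : ℝ)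

theorem powSum_zero (c : Ioi (0 : ℝ) →₀ ℝ) : powSum c 0 = 0 :=
  Finset.sum_eq_zero fun t _ => by simp [Real.zero_rpow t.2.ne']

theorem eventually_powSum_ne_zero {c : Ioi (0 : ℝ) →₀ ℝ} (hc : c ≠ 0) :
    ∀ᶠ s in 𝓝[>] 0, powSum c s ≠ 0 := by
  have hne := Finsupp.support_nonempty_iff.2 hc
  set t₀ := c.support.min' hne
  have hterm : ∀ t ∈ c.support, Tendsto (fun s : ℝ => c t * s ^ ((t : ℝ) - t₀)) (𝓝[>] 0)
      (𝓝 (if t = t₀ then c t₀ else 0)) := by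
    intro t ht
    split_ifs with h
    · simp [h]
    · have hpos : 0 < (t : ℝ) - t₀ :=
        sub_pos.2 (lt_of_le_of_ne (c.support.min'_le t ht) (Subtype.coe_injective.ne h).symm)
      simpa [Real.zero_rpow hpos.ne'] using (((Real.continuousAt_rpow_const 0 _
        (Or.inr hpos.le)).tendsto.mono_left nhdsWithin_le_nhds).const_mul (c t))
  have hlim := tendsto_finsetSum _ hterm
  rw [Finset.sum_ite_eq' _ _ _, if_pos (c.support.min'_mem hne)] at hlim
  filter_upwards [hlim.eventually_ne (Finsupp.mem_support_iff.1 (c.support.min'_mem hne)),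
    self_mem_nhdsWithin] with s hs (hs0 : 0 < s)
  have hfactor : powSum c s = s ^ (t₀ : ℝ) * ∑ t ∈ c.support, c t * s ^ ((t : ℝ) - t₀) := by
    rw [powSum, Finset.mul_sum]
    refine Finset.sum_congr rfl fun t _ => ?_
    rw [Real.rpow_sub hs0]
    field_simp
  rw [hfactor]
  exact mul_ne_zero (Real.rpow_pos_of_pos hs0 _).ne' hs

variable {X : Type*} [MetricSpace X] {K : Set X}

noncomputable def powDist (K : Set X) (t : Ioi (0 : ℝ)) (y : X) : ℝ := Metric.infDist y K ^ (t : ℝ)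

theorem continuous_of_mem_span_powDist {g : X → ℝ}
    (hg : g ∈ Submodule.span ℝ (range (powDist K))) : Continuous g := by
  have hle : Submodule.span ℝ (range (powDist K)) ≤
      LinearMap.range (ContinuousMap.coeFnLinearMap ℝ) :=
    Submodule.span_le.2 (range_subset_iff.2 fun t =>
      ⟨⟨_, (Metric.continuous_infDist_pt K).rpow_const fun _ => Or.inr t.2.le⟩, rfl⟩)
  obtain ⟨g', rfl⟩ := hle hg
  exact g'.continuous

theorem linearCombination_powDist_apply (c : Ioi (0 : ℝ) →₀ ℝ) (y : X) :
    Finsupp.linearCombination ℝ (powDist K) c y = powSum c (Metric.infDist y K) := by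
  simp [Finsupp.linearCombination_apply, Finsupp.sum, powSum, powDist]

theorem linearCombination_powDist_eq_zero_of_mem (c : Ioi (0 : ℝ) →₀ ℝ) {y : X} (hy : y ∈ K) :
    Finsupp.linearCombination ℝ (powDist K) c y = 0 := by
  rw [linearCombination_powDist_apply, Metric.infDist_zero_of_mem hy, powSum_zero]

theorem mem_closure_support_linearCombination_powDist (hK : IsClosed K) (hKc : Dense Kᶜ)
    {c : Ioi (0 : ℝ) →₀ ℝ} (hc : c ≠ 0) {x : X} (hx : x ∈ K) :
    x ∈ closure (support (Finsupp.linearCombination ℝ (powDist K) c)) := by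
  have hdist : Tendsto (fun y => Metric.infDist y K) (𝓝[Kᶜ] x) (𝓝[>] 0) :=
    tendsto_nhdsWithin_iff.2 ⟨(Metric.infDist_zero_of_mem hx ▸
      (Metric.continuous_infDist_pt K).tendsto x).mono_left nhdsWithin_le_nhds,
      eventually_nhdsWithin_of_forall fun y hy => (hK.notMem_iff_infDist_pos ⟨x, hx⟩).1 hy⟩
  have := mem_closure_iff_nhdsWithin_neBot.1 (hKc.closure_eq.symm ▸ mem_univ x)
  rw [mem_closure_iff_frequently]
  refine ((hdist.eventually (eventually_powSum_ne_zero hc)).frequently.filter_mono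
    nhdsWithin_le_nhds).mono fun y hy => ?_
  rwa [mem_support, linearCombination_powDist_apply]

theorem rank_span_powDist (hK : IsClosed K) (hKc : Dense Kᶜ) (hK0 : K.Nonempty) :
    Module.rank ℝ (Submodule.span ℝ (range (powDist K))) = 𝔠 := by
  have hli : LinearIndependent ℝ (powDist K) := linearIndependent_iff.2 fun c hc =>
    by_contra fun hc0 => by
      obtain ⟨x, hx⟩ := hK0
      simpa [hc] using mem_closure_support_linearCombination_powDist hK hKc hc0 hx
  rw [rank_span hli]
  simpa [mk_Ioi_real] using mk_range_eq_of_injective hli.injective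

end CompositeLineability

open CompositeLineability

/-- There exist a vector space `V` of dimension `2^𝔠` of functions `ℝ → ℝ` whose
restriction to every compact interval is Riemann integrable, and a vector space `W`
of dimension `𝔠` of continuous functions on `[0,1]`, such that `f ∘ g` is not
Riemann integrable on `[0,1]` for every `f ∈ V \ {0}` and `g ∈ W \ {0}`. -/
theorem composite_not_riemann_integrable_lineability :
    ∃ (V : Submodule ℝ (ℝ → ℝ)) (W : Submodule ℝ (Set.Icc (0:ℝ) 1 → ℝ)),
      Module.rank ℝ V = 2 ^ Cardinal.continuum ∧
      Module.rank ℝ W = Cardinal.continuum ∧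
      (∀ f ∈ V, ∀ α β : ℝ, RiemannIntegrableOn f α β) ∧
      (∀ g ∈ W, Continuous g) ∧
      (∀ f ∈ V, f ≠ 0 → ∀ g ∈ W, g ≠ 0 →
        ¬ RiemannIntegrableI (fun x : Set.Icc (0:ℝ) 1 => f (g x))) := by
  obtain ⟨K, hK, hKc, hKvol⟩ := exists_isClosed_dense_compl_volume_image_ne_zero
  have hK0 : K.Nonempty := nonempty_iff_ne_empty.2 fun h => hKvol (by simp [h])
  refine ⟨_, _, rank_span_spike, rank_span_powDist hK hKc hK0,
    fun f hf => riemannIntegrableOn_of_mem_span_spike hf,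
    fun g hg => continuous_of_mem_span_powDist hg, ?_⟩
  rintro f hf hf0 g hg hg0 ⟨-, hnull⟩
  have hgc := continuous_of_mem_span_powDist hg
  rw [← Finsupp.range_linearCombination] at hf hg
  obtain ⟨c, rfl⟩ := hf
  obtain ⟨d, rfl⟩ := hg
  obtain ⟨a, ha, hfreq⟩ := exists_frequently_linearCombination_spike_eq (c := c)
    (by rintro rfl; simp at hf0)
  refine hKvol (measure_mono_null (image_mono fun x hx => ?_) hnull)
  exact not_continuousAt_comp_of_frequently hgc (linearCombination_powDist_eq_zero_of_mem d hx)
    (mem_closure_support_linearCombination_powDist hK hKc (by rintro rfl; simp at hg0) hx)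
    (by simpa [linearCombination_spike_apply, spike_zero] using ha.symm) hfreq
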